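/- arXiv:2310.09933 — 8 statements merged into one kernel-verified Lean document; each statement's English description precedes it below -/
import Mathlib

section
/- For all vectors x, y in ℝ², the inequality (x − y)ᵀ(‖x‖²x − ‖y‖²y) ≥ (1/2)‖y‖²‖x − y‖² holds. -/
open RealInnerProductSpace

theorem prop8_inequality (x y : EuclideanSpace ℝ (Fin 2)) :
    ⟪x - y, ‖x‖ ^ 2 • x - ‖y‖ ^ 2 • y⟫ ≥ (1 / 2) * ‖y‖ ^ 2 * ‖x - y‖ ^ 2 := by
  have hs : ⟪x, y⟫ ≤ ‖x‖ * ‖y‖ := real_inner_le_norm x y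
  have hxx : ⟪x, x⟫ = ‖x‖ ^ 2 := real_inner_self_eq_norm_sq x
  have hyy : ⟪y, y⟫ = ‖y‖ ^ 2 := real_inner_self_eq_norm_sq y
  have hyx : ⟪y, x⟫ = ⟪x, y⟫ := real_inner_comm x y
  have hns : ‖x - y‖ ^ 2 = ‖x‖ ^ 2 - 2 * ⟪x, y⟫ + ‖y‖ ^ 2 := norm_sub_sq_real x y
  rw [inner_sub_left, inner_sub_right, inner_sub_right, real_inner_smul_right,
    real_inner_smul_right, real_inner_smul_right, real_inner_smul_right,
    hxx, hyy, hyx, hns]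
  nlinarith [norm_nonneg x, norm_nonneg y, sq_nonneg (‖x‖ - ‖y‖),
    mul_nonneg (norm_nonneg x) (norm_nonneg y), sq_nonneg (‖x‖ + ‖y‖),
    mul_nonneg (mul_nonneg (norm_nonneg x) (norm_nonneg x)) (norm_nonneg y)]
end

section
/- For all vectors x, y in ℝ², one has ‖x‖⁴ + ‖y‖⁴ − (xᵀy)(‖x‖² + ‖y‖²) ≥ (1/2)(‖x‖² + ‖y‖²)‖x − y‖², and consequently (x − y)ᵀ(‖x‖²x − ‖y‖²y) ≥ (1/2)(‖x‖² + ‖y‖²)‖x − y‖². -/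
open RealInnerProductSpace

theorem prop8_sharper (x y : EuclideanSpace ℝ (Fin 2)) :
    ‖x‖ ^ 4 + ‖y‖ ^ 4 - ⟪x, y⟫ * (‖x‖ ^ 2 + ‖y‖ ^ 2) ≥
      (1 / 2) * (‖x‖ ^ 2 + ‖y‖ ^ 2) * ‖x - y‖ ^ 2 ∧
    ⟪x - y, ‖x‖ ^ 2 • x - ‖y‖ ^ 2 • y⟫ ≥
      (1 / 2) * (‖x‖ ^ 2 + ‖y‖ ^ 2) * ‖x - y‖ ^ 2 := by
  have hsub : ‖x - y‖ ^ 2 = ‖x‖ ^ 2 - 2 * ⟪x, y⟫ + ‖y‖ ^ 2 := by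
    rw [@norm_sub_sq_real]
  have h1 : ‖x‖ ^ 4 + ‖y‖ ^ 4 - ⟪x, y⟫ * (‖x‖ ^ 2 + ‖y‖ ^ 2) ≥
      (1 / 2) * (‖x‖ ^ 2 + ‖y‖ ^ 2) * ‖x - y‖ ^ 2 := by
    rw [hsub]; nlinarith [sq_nonneg (‖x‖ ^ 2 - ‖y‖ ^ 2)]
  refine ⟨h1, ?_⟩
  have hexp : ⟪x - y, ‖x‖ ^ 2 • x - ‖y‖ ^ 2 • y⟫ =
      ‖x‖ ^ 4 + ‖y‖ ^ 4 - ⟪x, y⟫ * (‖x‖ ^ 2 + ‖y‖ ^ 2) := by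
    rw [inner_sub_left, inner_sub_right, inner_sub_right, real_inner_smul_right,
      real_inner_smul_right, real_inner_smul_right, real_inner_smul_right,
      real_inner_self_eq_norm_sq, real_inner_self_eq_norm_sq, real_inner_comm y x]
    ring
  rw [hexp]; exact h1
end

section
/- Consider the cubic equation a x³ + b x² + c x + d = 0 with real coefficients satisfying a > 0, c ≥ 0, d < 0, b² ≤ 4ac, and b > 0. Then the discriminant Δ := b²c² − 4ac³ − 4db³ − 27a²d² + 18abcd is negative. -/
theorem discriminant_negative (a b c d : ℝ) (ha : 0 < a) (hc : 0 ≤ c) (hd : d < 0)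
    (hb2 : b ^ 2 ≤ 4 * a * c) (hb : 0 < b) :
    b ^ 2 * c ^ 2 - 4 * a * c ^ 3 - 4 * d * b ^ 3 - 27 * a ^ 2 * d ^ 2
      + 18 * a * b * c * d < 0 := by
  have hb3 : b ^ 3 ≤ 4 * a * b * c := by nlinarith [mul_le_mul_of_nonneg_left hb2 (le_of_lt hb)]
  have h2 : 0 < 18 * a * b * c - 4 * b ^ 3 - 27 * a ^ 2 * d := by
    nlinarith [mul_pos (mul_pos ha hb) (lt_of_lt_of_le (by positivity) hb2 : (0:ℝ) < 4 * a * c), mul_pos (mul_pos ha ha) (neg_pos.mpr hd)]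
  have h3 : d * (18 * a * b * c - 4 * b ^ 3 - 27 * a ^ 2 * d) < 0 := mul_neg_of_neg_of_pos hd h2
  have h4 : c ^ 2 * (b ^ 2 - 4 * a * c) ≤ 0 :=
    mul_nonpos_of_nonneg_of_nonpos (sq_nonneg c) (by linarith)
  nlinarith [h3, h4]
end

section
/- Consider the planar system dv/dt = η(κ_r + α)v + ω̃Jv + ηK v − (ηα/w)‖v‖²v + ηY v_g in ℝ², written abstractly as dv/dt = F(v) with equilibrium v_s (F(v_s) = 0), where F(v) = M v + ηY v_g − (ηα/w)‖v‖²v and M = ω_Δ J + η(S* − Y_φ) + ηα I₂ is a real 2×2 matrix of the form c I₂ + d J with c = η(κ_r + α). Define V(v) = (1/(2η))‖v − v_s‖². Then along trajectories, dV/dt ≤ (κ_r + α − (α/(2w))‖v_s‖²)‖v − v_s‖². In particular, if κ_r + α < (α/(2w))‖v_s‖² then v_s is globally asymptotically stable. -/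
/-!
Subtracting the equilibrium equation writes the vector field as
`F z = (c + d i) (z - v_s) - k (‖z‖² z - ‖v_s‖² v_s)` with `k = ηα/w ≥ 0`. Paired with
`z - v_s`, the rotation `d i` contributes nothing, and the cubic part is strongly monotone
in the sense `⟪x - y, ‖x‖² x - ‖y‖² y⟫ ≥ ‖y‖² ‖x - y‖² / 2`. This gives
`V' ≤ (κ_r + α - α ‖v_s‖² / (2w)) ‖v - v_s‖² = 2η (κ_r + α - α ‖v_s‖² / (2w)) V`,
and when the rate is negative Grönwall's inequality makes `V` decay exponentially.
-/

open Filter Topology RealInnerProductSpace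

theorem half_norm_sq_mul_norm_sub_sq_le_inner_norm_sq_smul_sub {E : Type*}
    [NormedAddCommGroup E] [InnerProductSpace ℝ E] (x y : E) :
    ‖y‖ ^ 2 * ‖x - y‖ ^ 2 / 2 ≤ ⟪x - y, ‖x‖ ^ 2 • x - ‖y‖ ^ 2 • y⟫ := by
  have hxy : ‖x‖ ^ 2 * ⟪x, y⟫ ≤ ‖x‖ ^ 2 * (‖x‖ * ‖y‖) :=
    mul_le_mul_of_nonneg_left (real_inner_le_norm x y) (sq_nonneg _)
  have hfactor : 0 ≤ (‖x‖ - ‖y‖) ^ 2 * (‖x‖ ^ 2 + ‖x‖ * ‖y‖ + ‖y‖ ^ 2 / 2) := by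
    have := norm_nonneg x; have := norm_nonneg y; positivity
  -- after Cauchy–Schwarz on `⟪x, y⟫`, the gap is exactly `hfactor`
  rw [norm_sub_sq_real]
  simp only [inner_sub_left, inner_sub_right, real_inner_smul_right, real_inner_self_eq_norm_sq,
    real_inner_comm x y]
  nlinarith

theorem Complex.real_inner_mul_self_right (w z : ℂ) : ⟪z, w * z⟫ = w.re * ‖z‖ ^ 2 := by
  rw [Complex.inner, mul_assoc, Complex.mul_conj, Complex.normSq_eq_norm_sq,
    Complex.re_mul_ofReal]

theorem Complex.real_inner_sub_linear_sub_cubic_le (w : ℂ) {k : ℝ} (hk : 0 ≤ k) (x y : ℂ) :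
    ⟪x - y, w * (x - y) - k • (‖x‖ ^ 2 • x - ‖y‖ ^ 2 • y)⟫ ≤
      (w.re - k * ‖y‖ ^ 2 / 2) * ‖x - y‖ ^ 2 := by
  rw [inner_sub_right, real_inner_smul_right, Complex.real_inner_mul_self_right]
  nlinarith [half_norm_sq_mul_norm_sub_sq_le_inner_norm_sq_smul_sub x y]

theorem tendsto_zero_of_hasDerivAt_le_mul_self {g g' : ℝ → ℝ} {K : ℝ} (hK : K < 0)
    (hg : ∀ t, HasDerivAt g (g' t) t) (hbound : ∀ t, g' t ≤ K * g t) (hnonneg : ∀ t, 0 ≤ g t) :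
    Tendsto g atTop (𝓝 0) := by
  have hgronwall : ∀ t, 0 ≤ t → g t ≤ g 0 * Real.exp (K * t) := fun t ht => by
    simpa [gronwallBound_ε0] using le_gronwallBound_of_liminf_deriv_right_le (K := K) (ε := 0)
      (fun s _ => (hg s).continuousAt.continuousWithinAt)
      (fun s _ _ hr => (hg s).hasDerivWithinAt.liminf_right_slope_le hr) le_rfl
      (fun s _ => (hbound s).trans_eq (add_zero _).symm) t ⟨ht, le_rfl⟩
  have hexp : Tendsto (fun t => g 0 * Real.exp (K * t)) atTop (𝓝 0) := by
    simpa using (Real.tendsto_exp_atBot.comp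
      (tendsto_id.const_mul_atTop_of_neg hK)).const_mul (g 0)
  exact squeeze_zero' (Eventually.of_forall hnonneg)
    ((eventually_ge_atTop 0).mono hgronwall) hexp

/-- The plane `ℝ²` is identified with `ℂ`, so that `J` is multiplication by `I` and
`c I₂ + d J` is multiplication by `c + d i`. -/
theorem complex_droop_global_stability (η α w κr ωΔ : ℝ) (hη : 0 < η) (hα : 0 < α)
    (hw : 0 < w) (g vs : ℂ)
    (F : ℂ → ℂ)
    (hF : ∀ z : ℂ, F z = ((η * (κr + α) : ℝ) + (ωΔ : ℝ) * Complex.I) * z + g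
      - ((η * α / w : ℝ) : ℂ) * ((‖z‖ : ℝ) : ℂ) ^ 2 * z)
    (heq : F vs = 0)
    (v : ℝ → ℂ) (hv : ∀ t : ℝ, HasDerivAt v (F (v t)) t) :
    (∀ t : ℝ, ∃ D : ℝ,
      HasDerivAt (fun s => (1 / (2 * η)) * ‖v s - vs‖ ^ 2) D t ∧
      D ≤ (κr + α - (α / (2 * w)) * ‖vs‖ ^ 2) * ‖v t - vs‖ ^ 2) ∧
    (κr + α < (α / (2 * w)) * ‖vs‖ ^ 2 →
      Filter.Tendsto v Filter.atTop (nhds vs)) := by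
  set c := κr + α - (α / (2 * w)) * ‖vs‖ ^ 2
  have hF_shift : ∀ z, F z = ((η * (κr + α) : ℝ) + (ωΔ : ℝ) * Complex.I) * (z - vs)
      - (η * α / w) • (‖z‖ ^ 2 • z - ‖vs‖ ^ 2 • vs) := fun z => by
    rw [hF vs] at heq
    simp only [Complex.real_smul, Complex.ofReal_pow, hF z]
    linear_combination heq
  have hV : ∀ t, HasDerivAt (fun s => (1 / (2 * η)) * ‖v s - vs‖ ^ 2)
      (⟪v t - vs, F (v t)⟫ / η) t := fun t =>
    (((hv t).sub_const vs).norm_sq.const_mul _).congr_deriv (by field_simp)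
  have hV_le : ∀ t, ⟪v t - vs, F (v t)⟫ / η ≤ c * ‖v t - vs‖ ^ 2 := fun t => by
    rw [div_le_iff₀ hη, hF_shift]
    refine (Complex.real_inner_sub_linear_sub_cubic_le _ (by positivity) _ _).trans_eq ?_
    simp only [Complex.add_re, Complex.ofReal_re, Complex.mul_re, Complex.I_re, Complex.I_im,
      Complex.ofReal_im, c]
    ring
  refine ⟨fun t => ⟨_, hV t, hV_le t⟩, fun hc => ?_⟩
  have hV_lim := tendsto_zero_of_hasDerivAt_le_mul_self (K := 2 * η * c) (by nlinarith) hV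
    (fun t => (hV_le t).trans_eq (by field_simp)) (fun t => by positivity)
  have hsq : Tendsto (fun t => ‖v t - vs‖ ^ 2) atTop (𝓝 0) := by
    simpa [← mul_assoc, hη.ne'] using hV_lim.const_mul (2 * η)
  exact tendsto_iff_norm_sub_tendsto_zero.2 (by simpa using hsq.sqrt)
end

section
/- Consider the planar system dv/dt = η(κ_r + α − (α/w)‖v‖²)v + ω̃ J v + ηY v_g with η > 0, α > 0, w > 0. Let W(v) = ‖v‖². If ‖v‖ > max{v_g, √(w(1 + (κ_r + |y|)/α))} (with v_g = ‖velocity of grid input‖ bound satisfying ‖Y v_g‖ ≤ |y| v_g), then dW/dt < 0 along trajectories. Consequently every trajectory is bounded and ultimately enters and remains in the ball of radius v_m = max{v_g, √(w(1 + (κ_r + |y|)/α))}. -/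
/-!
`W = ‖v‖²` has derivative `2⟪v, v̇⟫`; the rotation `ω̃ J v` is orthogonal to `v` and
Cauchy–Schwarz bounds the input term, which gives `Ẇ ≤ -2η(α/w)‖v‖²(‖v‖² - v_m²)` as soon as
`‖v‖ ≥ v_m`. Outside the ball of radius `v_m + δ`, `W` therefore decreases at a uniform rate,
so it enters that ball in finite time, and it cannot leave it again because `Ẇ < 0` on its
boundary.
-/

open Complex

section Lyapunov

variable {W W' : ℝ → ℝ} {B : ℝ}

theorem exists_le_of_hasDerivAt_le_neg {K : ℝ} (hW : ∀ t, HasDerivAt W (W' t) t) (hK : 0 < K)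
    (hdecay : ∀ t, B ≤ W t → W' t ≤ -K) : ∃ T, W T ≤ B := by
  by_contra! habove
  have hanti : Antitone fun t => W t + K * t :=
    antitone_of_hasDerivAt_nonpos (fun t => (hW t).add ((hasDerivAt_id t).const_mul K))
      fun t => show W' t + K * 1 ≤ 0 by linarith [hdecay t (habove t).le]
  have hT : W ((W 0 - B) / K) + K * ((W 0 - B) / K) ≤ W 0 + K * 0 :=
    hanti (div_nonneg (by linarith [habove 0]) hK.le)
  rw [mul_div_cancel₀ _ hK.ne'] at hT
  linarith [habove ((W 0 - B) / K)]

theorem le_of_hasDerivAt_neg_on_level {T : ℝ} (hW : ∀ t, HasDerivAt W (W' t) t) (hT : W T ≤ B)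
    (hboundary : ∀ t, W t = B → W' t < 0) {t : ℝ} (ht : T ≤ t) : W t ≤ B :=
  image_le_of_deriv_right_lt_deriv_boundary (B' := 0)
    (fun s _ => (hW s).continuousAt.continuousWithinAt)
    (fun s _ => (hW s).hasDerivWithinAt) hT (fun _ => hasDerivAt_const _ _)
    (fun s _ => hboundary s) ⟨ht, le_rfl⟩

theorem eventually_le_of_hasDerivAt_le_neg {K : ℝ} (hW : ∀ t, HasDerivAt W (W' t) t)
    (hK : 0 < K) (hdecay : ∀ t, B ≤ W t → W' t ≤ -K) : ∃ T, ∀ t ≥ T, W t ≤ B := by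
  obtain ⟨T, hT⟩ := exists_le_of_hasDerivAt_le_neg hW hK hdecay
  exact ⟨T, fun t => le_of_hasDerivAt_neg_on_level hW hT
    fun s hs => by linarith [hdecay s hs.ge]⟩

end Lyapunov

theorem inner_ofReal_mul_add_rotation (a ω : ℝ) (z g : ℂ) :
    inner ℝ z ((a : ℂ) * z + (ω : ℂ) * I * z + g) = a * ‖z‖ ^ 2 + inner ℝ z g := by
  simp only [inner_add_right, Complex.inner, Complex.mul_re, Complex.mul_im, ofReal_re,
    ofReal_im, I_re, I_im, conj_re, conj_im, Complex.sq_norm, normSq_apply]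
  ring

theorem le_sq_max_sqrt (c x : ℝ) : x ≤ max c √x ^ 2 := by
  rcases le_or_gt 0 x with hx | hx
  · calc x = √x ^ 2 := (Real.sq_sqrt hx).symm
      _ ≤ max c √x ^ 2 := pow_le_pow_left₀ (Real.sqrt_nonneg x) (le_max_right _ _) 2
  · exact hx.le.trans (sq_nonneg _)

theorem energy_rate_le {η α w κr yabs vg m r : ℝ} (hη : 0 ≤ η) (hα : 0 < α) (hw : 0 < w)
    (hy : 0 ≤ yabs) (hm0 : 0 ≤ m) (hvg : vg ≤ m) (hm : w * (1 + (κr + yabs) / α) ≤ m ^ 2)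
    (hmr : m ≤ r) :
    η * (κr + α - α / w * r ^ 2) * r ^ 2 + r * (η * (yabs * vg))
      ≤ -(η * (α / w) * r ^ 2 * (r ^ 2 - m ^ 2)) := by
  have hr : 0 ≤ r := hm0.trans hmr
  have hgain : κr + α + yabs ≤ α / w * m ^ 2 := by
    calc κr + α + yabs = α / w * (w * (1 + (κr + yabs) / α)) := by field_simp; ring
      _ ≤ α / w * m ^ 2 := by gcongr
  have hdrift : η * (κr + α - α / w * r ^ 2) * r ^ 2
      ≤ η * (-yabs - α / w * (r ^ 2 - m ^ 2)) * r ^ 2 := by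
    have : κr + α - α / w * r ^ 2 ≤ -yabs - α / w * (r ^ 2 - m ^ 2) := by linarith
    exact mul_le_mul_of_nonneg_right (mul_le_mul_of_nonneg_left this hη) (sq_nonneg r)
  have hinput : r * (η * (yabs * vg)) ≤ r * (η * (yabs * r)) := by
    gcongr
    exact hvg.trans hmr
  linear_combination hdrift + hinput

theorem ultimate_boundedness_general (η α w κr ωt yabs vg : ℝ) (hη : 0 < η) (hα : 0 < α)
    (hw : 0 < w) (hy : 0 < yabs)
    (g : ℂ) (hg : ‖g‖ ≤ η * (yabs * vg))
    (v : ℝ → ℂ)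
    (hv : ∀ t : ℝ, HasDerivAt v
      (((η * (κr + α - (α / w) * ‖v t‖ ^ 2) : ℝ) : ℂ) * v t
        + ((ωt : ℝ) : ℂ) * Complex.I * v t + g) t) :
    (∀ t : ℝ,
      ‖v t‖ > max vg (Real.sqrt (w * (1 + (κr + yabs) / α))) →
      ∃ D : ℝ, HasDerivAt (fun s => ‖v s‖ ^ 2) D t ∧ D < 0) ∧
    (∀ δ : ℝ, 0 < δ → ∃ T : ℝ, ∀ t ≥ T,
      ‖v t‖ ≤ max vg (Real.sqrt (w * (1 + (κr + yabs) / α))) + δ) := by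
  set m := max vg (Real.sqrt (w * (1 + (κr + yabs) / α)))
  have hm0 : 0 ≤ m := (Real.sqrt_nonneg _).trans (le_max_right _ _)
  have hαw : 0 < α / w := div_pos hα hw
  have hdecay : ∀ t, ∃ D, HasDerivAt (fun s => ‖v s‖ ^ 2) D t ∧
      (m ≤ ‖v t‖ → D ≤ -(2 * η * (α / w) * ‖v t‖ ^ 2 * (‖v t‖ ^ 2 - m ^ 2))) := by
    refine fun t => ⟨_, (hv t).norm_sq, fun hmv => ?_⟩
    rw [inner_ofReal_mul_add_rotation]
    have hinput : inner ℝ (v t) g ≤ ‖v t‖ * (η * (yabs * vg)) :=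
      (real_inner_le_norm _ _).trans (mul_le_mul_of_nonneg_left hg (norm_nonneg _))
    linarith [energy_rate_le hη.le hα hw hy.le hm0 (le_max_left _ _) (le_sq_max_sqrt _ _) hmv]
  choose W' hW hW' using hdecay
  refine ⟨fun t ht => ⟨W' t, hW t, (hW' t ht.le).trans_lt ?_⟩, fun δ hδ => ?_⟩
  · have hgap : 0 < ‖v t‖ ^ 2 - m ^ 2 := sub_pos.2 (pow_lt_pow_left₀ ht hm0 two_ne_zero)
    have hv0 : 0 < ‖v t‖ := hm0.trans_lt ht
    exact neg_neg_of_pos (by positivity)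
  have hgap : 0 < (m + δ) ^ 2 - m ^ 2 :=
    sub_pos.2 (pow_lt_pow_left₀ (by linarith) hm0 two_ne_zero)
  have hK : 0 < 2 * η * (α / w) * (m + δ) ^ 2 * ((m + δ) ^ 2 - m ^ 2) := by positivity
  obtain ⟨T, hT⟩ := eventually_le_of_hasDerivAt_le_neg hW hK fun t ht => by
    have hmv : m + δ ≤ ‖v t‖ := (sq_le_sq₀ (by positivity) (norm_nonneg _)).1 ht
    refine (hW' t (by linarith)).trans ?_
    gcongr
  exact ⟨T, fun t htT => (sq_le_sq₀ (norm_nonneg _) (by positivity)).1 (hT t htT)⟩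

/-- Proposition 6: trajectory boundedness and ultimate bound, with `ℝ²` identified
with `ℂ` (so `J` is multiplication by `I`). `g` stands for `η Y v_g`, with
`‖Y v_g‖ ≤ |y| v_g`. -/
theorem ultimate_boundedness (η α w κr ωt yabs vg : ℝ) (hη : 0 < η) (hα : 0 < α)
    (hw : 0 < w) (hy : 0 < yabs) (hvg : 0 ≤ vg)
    (g : ℂ) (hg : ‖g‖ ≤ η * (yabs * vg))
    (v : ℝ → ℂ)
    (hv : ∀ t : ℝ, HasDerivAt v
      (((η * (κr + α - (α / w) * ‖v t‖ ^ 2) : ℝ) : ℂ) * v t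
        + ((ωt : ℝ) : ℂ) * Complex.I * v t + g) t) :
    (∀ t : ℝ,
      ‖v t‖ > max vg (Real.sqrt (w * (1 + (κr + yabs) / α))) →
      ∃ D : ℝ, HasDerivAt (fun s => ‖v s‖ ^ 2) D t ∧ D < 0) ∧
    (∀ δ : ℝ, 0 < δ → ∃ T : ℝ, ∀ t ≥ T,
      ‖v t‖ ≤ max vg (Real.sqrt (w * (1 + (κr + yabs) / α))) + δ) :=
  ultimate_boundedness_general η α w κr ωt yabs vg hη hα hw hy g hg v hv
end

section
/- Let A be the real 2×2 matrix with entries A₁₁ = η κ + ηα − ηα(3a² + b²)/w, A₁₂ = −ω − ηκ_i − 2ηα ab/w, A₂₁ = ω + ηκ_i − 2ηα ab/w, A₂₂ = ηκ + ηα − ηα(3b² + a²)/w, where η > 0, α ≥ 0, w > 0, κ, κ_i, ω, a, b ∈ ℝ, and let s² = a² + b². Then the characteristic polynomial of A is λ² + 2η(2αs²/w − α − κ)λ + η²[(κ + α − 2αs²/w)² − (αs²/w)² + (ω/η + κ_i)²], and A is Hurwitz if κ + α < 2αs²/w and (κ + α − 2αs²/w)² + (ω/η + κ_i)² > (αs²/w)².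 -/
open Polynomial

lemma charpoly_fin_two {R : Type*} [CommRing R] (M : Matrix (Fin 2) (Fin 2) R) :
    M.charpoly = X ^ 2 - C M.trace * X + C M.det := by
  rw [Matrix.charpoly, Matrix.det_fin_two, Matrix.charmatrix_apply_eq,
    Matrix.charmatrix_apply_eq, Matrix.charmatrix_apply_ne _ _ _ (by decide),
    Matrix.charmatrix_apply_ne _ _ _ (by decide), Matrix.trace_fin_two, Matrix.det_fin_two]
  simp only [map_add, map_sub, map_mul, map_neg]
  ring

lemma quad_root_neg_re (p q : ℝ) (hp : 0 < p) (hq : 0 < q) (z : ℂ)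
    (hz : z ^ 2 + (p : ℂ) * z + (q : ℂ) = 0) : z.re < 0 := by
  have h1 : z.re ^ 2 - z.im ^ 2 + p * z.re + q = 0 := by
    have := congrArg Complex.re hz
    simpa [Complex.ext_iff, pow_two, Complex.mul_re, Complex.mul_im] using this
  have h2 : 2 * z.re * z.im + p * z.im = 0 := by
    have := congrArg Complex.im hz
    have h := congrArg Complex.im hz
    simp [Complex.ext_iff, pow_two, Complex.mul_re, Complex.mul_im] at h
    linarith
  by_contra hx
  push_neg at hx
  have h3 : z.im * (2 * z.re * z.im + p * z.im) = 0 := by rw [h2]; ring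
  have him : z.im = 0 := by nlinarith [sq_nonneg z.im]
  nlinarith [sq_nonneg z.re]

theorem jacobian_charpoly_and_hurwitz (η α w κ κi ω a b : ℝ) (hη : 0 < η)
    (hα : 0 ≤ α) (hw : 0 < w) :
    let s2 : ℝ := a ^ 2 + b ^ 2
    let A : Matrix (Fin 2) (Fin 2) ℝ :=
      !![η * κ + η * α - η * α * (3 * a ^ 2 + b ^ 2) / w,
         -ω - η * κi - 2 * η * α * (a * b) / w;
         ω + η * κi - 2 * η * α * (a * b) / w,
         η * κ + η * α - η * α * (3 * b ^ 2 + a ^ 2) / w]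
    A.charpoly = Polynomial.X ^ 2
        + Polynomial.C (2 * η * (2 * α * s2 / w - α - κ)) * Polynomial.X
        + Polynomial.C (η ^ 2 * ((κ + α - 2 * α * s2 / w) ^ 2 - (α * s2 / w) ^ 2
            + (ω / η + κi) ^ 2)) ∧
      (κ + α < 2 * α * s2 / w →
        (κ + α - 2 * α * s2 / w) ^ 2 + (ω / η + κi) ^ 2 > (α * s2 / w) ^ 2 →
        ∀ z : ℂ, ((A.map (algebraMap ℝ ℂ)).charpoly).IsRoot z → z.re < 0) := by
  intro s2 A
  have hη' : η ≠ 0 := ne_of_gt hη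
  have hw' : w ≠ 0 := ne_of_gt hw
  have hchar : A.charpoly = Polynomial.X ^ 2
        + Polynomial.C (2 * η * (2 * α * s2 / w - α - κ)) * Polynomial.X
        + Polynomial.C (η ^ 2 * ((κ + α - 2 * α * s2 / w) ^ 2 - (α * s2 / w) ^ 2
            + (ω / η + κi) ^ 2)) := by
    rw [charpoly_fin_two]
    have ht : A.trace = -(2 * η * (2 * α * s2 / w - α - κ)) := by
      simp [A, Matrix.trace_fin_two, s2]
      field_simp
      ring
    have hd : A.det = η ^ 2 * ((κ + α - 2 * α * s2 / w) ^ 2 - (α * s2 / w) ^ 2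
            + (ω / η + κi) ^ 2) := by
      simp [A, Matrix.det_fin_two, s2]
      field_simp
      ring
    rw [ht, hd]
    simp only [map_add, map_sub, map_mul, map_neg, map_pow, map_div₀, map_ofNat]
    ring_nf
  refine ⟨hchar, ?_⟩
  intro h1 h2 z hz
  set p := 2 * η * (2 * α * s2 / w - α - κ) with hpdef
  set q := η ^ 2 * ((κ + α - 2 * α * s2 / w) ^ 2 - (α * s2 / w) ^ 2
            + (ω / η + κi) ^ 2) with hqdef
  have hp : 0 < p := by
    apply mul_pos (by linarith); linarith
  have hq : 0 < q := by
    apply mul_pos (by positivity); nlinarith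
  have hmap : (A.map (algebraMap ℝ ℂ)).charpoly = A.charpoly.map (algebraMap ℝ ℂ) := by
    rw [← Matrix.charpoly_map]
  rw [hmap, hchar] at hz
  have hz' : z ^ 2 + (p : ℂ) * z + (q : ℂ) = 0 := by
    have := hz
    simpa [Polynomial.IsRoot, Polynomial.eval_map, ← hpdef, ← hqdef] using this
  exact quad_root_neg_re p q hp hq z hz'
end

section
/- Under the setting of the Jacobian A above, if either κ + α > 2αs²/w, or (κ + α − 2αs²/w)² + (ω/η + κ_i)² < (αs²/w)², then A has an eigenvalue with positive real part (the equilibrium is unstable). -/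
lemma quad_root_pos_re (T D : ℝ) (h : 0 < T ∨ D < 0) :
    ∃ z : ℂ, z ^ 2 - (T : ℂ) * z + (D : ℂ) = 0 ∧ 0 < z.re := by
  rcases le_or_gt 0 (T ^ 2 - 4 * D) with hd | hd
  · set s := Real.sqrt (T ^ 2 - 4 * D) with hs
    have hs2 : s ^ 2 = T ^ 2 - 4 * D := Real.sq_sqrt hd
    have hsn : 0 ≤ s := Real.sqrt_nonneg _
    have hx : ((T + s) / 2) ^ 2 - T * ((T + s) / 2) + D = 0 := by
      linear_combination (1 / 4 : ℝ) * hs2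
    refine ⟨(((T + s) / 2 : ℝ) : ℂ), by exact_mod_cast hx, ?_⟩
    have hpos : 0 < (T + s) / 2 := by
      rcases h with h | h
      · linarith
      · nlinarith [mul_nonneg hsn hsn]
    simpa using hpos
  · have hT : 0 < T := by
      rcases h with h | h
      · exact h
      · nlinarith [sq_nonneg T]
    set s := Real.sqrt (4 * D - T ^ 2) with hs
    have hs2 : s ^ 2 = 4 * D - T ^ 2 := Real.sq_sqrt (by linarith)
    have hsC : (s : ℂ) ^ 2 = 4 * (D : ℂ) - (T : ℂ) ^ 2 := by exact_mod_cast hs2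
    refine ⟨(T : ℂ) / 2 + (s : ℝ) * Complex.I / 2, ?_, ?_⟩
    · linear_combination (Complex.I ^ 2 / 4) * hsC +
        ((4 * (D : ℂ) - (T : ℂ) ^ 2) / 4) * Complex.I_sq
    · simp
      positivity

theorem instability_conditions (η α w κ κi ω a b : ℝ) (hη : 0 < η)
    (hα : 0 < α) (hw : 0 < w)
    (hcond : κ + α > 2 * α * (a ^ 2 + b ^ 2) / w ∨
      (κ + α - 2 * α * (a ^ 2 + b ^ 2) / w) ^ 2 + (ω / η + κi) ^ 2
        < (α * (a ^ 2 + b ^ 2) / w) ^ 2) :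
    let A : Matrix (Fin 2) (Fin 2) ℝ :=
      !![η * κ + η * α - η * α * (3 * a ^ 2 + b ^ 2) / w,
         -ω - η * κi - 2 * η * α * (a * b) / w;
         ω + η * κi - 2 * η * α * (a * b) / w,
         η * κ + η * α - η * α * (3 * b ^ 2 + a ^ 2) / w]
    ∃ z : ℂ, ((A.map (algebraMap ℝ ℂ)).charpoly).IsRoot z ∧ 0 < z.re := by
  intro A
  set T : ℝ := 2 * η * (κ + α - 2 * α * (a ^ 2 + b ^ 2) / w) with hT
  set D : ℝ := (η * (κ + α) - 2 * η * α * (a ^ 2 + b ^ 2) / w) ^ 2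
      + (ω + η * κi) ^ 2 - (η * α * (a ^ 2 + b ^ 2) / w) ^ 2 with hD
  have hη' : η ≠ 0 := ne_of_gt hη
  have hcond' : 0 < T ∨ D < 0 := by
    rcases hcond with h | h
    · left
      have : 0 < κ + α - 2 * α * (a ^ 2 + b ^ 2) / w := by linarith
      rw [hT]; positivity
    · right
      have key : D = η ^ 2 * ((κ + α - 2 * α * (a ^ 2 + b ^ 2) / w) ^ 2
          + (ω / η + κi) ^ 2 - (α * (a ^ 2 + b ^ 2) / w) ^ 2) := by
        rw [hD]; field_simp
      rw [key]
      exact mul_neg_of_pos_of_neg (by positivity) (by linarith)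
  obtain ⟨z, hz, hre⟩ := quad_root_pos_re T D hcond'
  rw [hT, hD] at hz
  push_cast at hz
  refine ⟨z, ?_, hre⟩
  simp only [Polynomial.IsRoot.def, Matrix.charpoly, Matrix.det_fin_two,
    Matrix.charmatrix_apply, Matrix.map_apply, A, Matrix.diagonal_apply, Fin.ext_iff,
    Matrix.cons_val', Matrix.cons_val_zero, Matrix.cons_val_one, Matrix.head_cons,
    Matrix.empty_val', Matrix.cons_val_fin_one]
  norm_num
  push_cast
  linear_combination hz
end

section
/- Let x_s ∈ ℂ with x_s ≠ 0 and ε > 3. Set r to be the unique positive solution of ((1 + r/|x_s|)³ − 1)/(r/|x_s|) = ε. Then for every x ∈ ℂ with |x − x_s| ≤ r, one has | |x|²x − |x_s|²x_s | ≤ ε|x_s|²|x − x_s|. -/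
/-! Split `‖x‖² x - ‖y‖² y = ‖x‖² (x - y) + (‖x‖ + ‖y‖)(‖x‖ - ‖y‖) y`: the cubic map is locally
Lipschitz with constant `‖x‖² + ‖x‖‖y‖ + ‖y‖²`. On the ball of radius `r` about `xs` this constant is
at most `(a + r)² + (a + r) a + a²` with `a = ‖xs‖`, which is `((a + r)³ - a³) / r`, i.e. exactly
`ε a²` for the radius `r` defined by the root condition. -/

theorem norm_sq_smul_sub_norm_sq_smul_le {E : Type*} [SeminormedAddCommGroup E] [NormedSpace ℝ E]
    (x y : E) :
    ‖‖x‖ ^ 2 • x - ‖y‖ ^ 2 • y‖ ≤ (‖x‖ ^ 2 + ‖x‖ * ‖y‖ + ‖y‖ ^ 2) * ‖x - y‖ := by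
  have hsplit : ‖x‖ ^ 2 • x - ‖y‖ ^ 2 • y
      = ‖x‖ ^ 2 • (x - y) + ((‖x‖ + ‖y‖) * (‖x‖ - ‖y‖)) • y := by
    rw [smul_sub, mul_sub, add_mul, add_mul, sub_smul]
    module
  have hnorm_diff : |‖x‖ - ‖y‖| ≤ ‖x - y‖ := abs_norm_sub_norm_le x y
  calc ‖‖x‖ ^ 2 • x - ‖y‖ ^ 2 • y‖
      ≤ ‖x‖ ^ 2 * ‖x - y‖ + (‖x‖ + ‖y‖) * |‖x‖ - ‖y‖| * ‖y‖ := by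
        rw [hsplit]
        refine (norm_add_le _ _).trans_eq ?_
        rw [norm_smul, norm_smul, Real.norm_eq_abs, Real.norm_eq_abs, abs_mul,
          abs_of_nonneg (by positivity : 0 ≤ ‖x‖ ^ 2),
          abs_of_nonneg (by positivity : 0 ≤ ‖x‖ + ‖y‖)]
    _ ≤ ‖x‖ ^ 2 * ‖x - y‖ + (‖x‖ + ‖y‖) * ‖x - y‖ * ‖y‖ := by gcongr
    _ = (‖x‖ ^ 2 + ‖x‖ * ‖y‖ + ‖y‖ ^ 2) * ‖x - y‖ := by ring

theorem one_add_div_pow_three_sub_one_div_div_mul_sq {a r : ℝ} (ha : a ≠ 0) (hr : r ≠ 0) :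
    ((1 + r / a) ^ 3 - 1) / (r / a) * a ^ 2 = (a + r) ^ 2 + (a + r) * a + a ^ 2 := by
  field_simp
  ring

theorem lemma1_scaled_general (xs : ℂ) (hxs : xs ≠ 0) (ε : ℝ) (r : ℝ) (hr : 0 < r)
    (hroot : ((1 + r / ‖xs‖) ^ 3 - 1) / (r / ‖xs‖) = ε) :
    ∀ x : ℂ, ‖x - xs‖ ≤ r →
      ‖(‖x‖ : ℂ) ^ 2 * x - (‖xs‖ : ℂ) ^ 2 * xs‖
        ≤ ε * ‖xs‖ ^ 2 * ‖x - xs‖ := by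
  intro x hx
  have hx_norm : ‖x‖ ≤ ‖xs‖ + r := (norm_le_norm_add_norm_sub' x xs).trans (by gcongr)
  calc ‖(‖x‖ : ℂ) ^ 2 * x - (‖xs‖ : ℂ) ^ 2 * xs‖
      = ‖‖x‖ ^ 2 • x - ‖xs‖ ^ 2 • xs‖ := by simp only [Complex.real_smul, Complex.ofReal_pow]
    _ ≤ (‖x‖ ^ 2 + ‖x‖ * ‖xs‖ + ‖xs‖ ^ 2) * ‖x - xs‖ := norm_sq_smul_sub_norm_sq_smul_le x xs
    _ ≤ ((‖xs‖ + r) ^ 2 + (‖xs‖ + r) * ‖xs‖ + ‖xs‖ ^ 2) * ‖x - xs‖ := by gcongr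
    _ = ε * ‖xs‖ ^ 2 * ‖x - xs‖ := by
        rw [← hroot, one_add_div_pow_three_sub_one_div_div_mul_sq (norm_ne_zero_iff.2 hxs) hr.ne']

theorem lemma1_scaled (xs : ℂ) (hxs : xs ≠ 0) (ε : ℝ) (hε : 3 < ε) (r : ℝ) (hr : 0 < r)
    (hroot : ((1 + r / ‖xs‖) ^ 3 - 1) / (r / ‖xs‖) = ε) :
    ∀ x : ℂ, ‖x - xs‖ ≤ r →
      ‖(‖x‖ : ℂ) ^ 2 * x - (‖xs‖ : ℂ) ^ 2 * xs‖
        ≤ ε * ‖xs‖ ^ 2 * ‖x - xs‖ :=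
  lemma1_scaled_general xs hxs ε r hr hroot
end
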